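/- arXiv:2503.17622 — 3 statements merged into one kernel-verified Lean document; each statement's English description precedes it below -/
import Mathlib

section
/- Let H be a real Hilbert space, K : H → H a bounded self-adjoint linear operator, b ∈ H, c ∈ ℝ, and f(u) = ⟨K u, u⟩ + 2⟨b, u⟩ + c. Then f attains its infimum over H if and only if K is positive semidefinite and b belongs to the range of K. -/
open scoped RealInnerProductSpace

/-!
Expanding `f` along a line through `v` gives `f (v + t • u) = f v + 2 t ⟪K v + b, u⟫ + t² ⟪K u, u⟫`.
If `v` is a minimizer, this quadratic in `t` is minimal at `t = 0`, which forces `⟪K u, u⟫ ≥ 0` and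
`⟪K v + b, u⟫ = 0` for every `u`, i.e. `b = K (-v)`. Conversely, if `K ≥ 0` and `b = K w`, then
completing the square gives `f u - f (-w) = ⟪K (u + w), u + w⟫ ≥ 0`.
-/

theorem nonneg_and_eq_zero_of_forall_quadratic_nonneg {a β : ℝ}
    (h : ∀ t : ℝ, 0 ≤ a * (t * t) + β * t) : 0 ≤ a ∧ β = 0 := by
  have hdiscrim : discrim a β 0 ≤ 0 := discrim_le_zero fun t => by simpa using h t
  have hβ : β = 0 := by
    rw [discrim, mul_zero, sub_zero] at hdiscrim
    exact pow_eq_zero_iff two_ne_zero |>.mp (le_antisymm hdiscrim (sq_nonneg β))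
  exact ⟨by simpa [hβ] using h 1, hβ⟩

section QuadraticFunctional

variable {H : Type*} [NormedAddCommGroup H] [InnerProductSpace ℝ H]
  {K : H →L[ℝ] H} {b : H} {c : ℝ}

def quadraticFunctional (K : H →L[ℝ] H) (b : H) (c : ℝ) (u : H) : ℝ :=
  ⟪K u, u⟫ + 2 * ⟪b, u⟫ + c

theorem quadraticFunctional_add_smul (hK : (K : H →ₗ[ℝ] H).IsSymmetric) (v u : H) (t : ℝ) :
    quadraticFunctional K b c (v + t • u) =
      quadraticFunctional K b c v + ⟪K u, u⟫ * (t * t) + 2 * ⟪K v + b, u⟫ * t := by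
  have hsym : ⟪K u, v⟫ = ⟪K v, u⟫ := (real_inner_comm v (K u)).trans (hK v u).symm
  simp only [quadraticFunctional, map_add, map_smul, inner_add_left, inner_add_right,
    real_inner_smul_left, real_inner_smul_right, hsym]
  ring

theorem quadraticFunctional_sub_eq_of_apply_eq (hK : (K : H →ₗ[ℝ] H).IsSymmetric) {w : H}
    (hw : K w = b) (u : H) :
    quadraticFunctional K b c u - quadraticFunctional K b c (-w) = ⟪K (u + w), u + w⟫ := by
  have hsym : ⟪K u, w⟫ = ⟪K w, u⟫ := (real_inner_comm w (K u)).trans (hK w u).symm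
  subst hw
  simp only [quadraticFunctional, map_add, map_neg, inner_add_left, inner_add_right,
    inner_neg_left, inner_neg_right, hsym]
  ring

theorem nonneg_and_add_eq_zero_of_isMinimizer (hK : (K : H →ₗ[ℝ] H).IsSymmetric) {v : H}
    (hv : ∀ u, quadraticFunctional K b c v ≤ quadraticFunctional K b c u) :
    (∀ u, 0 ≤ ⟪K u, u⟫) ∧ K v + b = 0 := by
  have hline (u : H) : 0 ≤ ⟪K u, u⟫ ∧ 2 * ⟪K v + b, u⟫ = 0 :=
    nonneg_and_eq_zero_of_forall_quadratic_nonneg fun t => by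
      have := hv (v + t • u)
      rw [quadraticFunctional_add_smul hK] at this
      linarith
  refine ⟨fun u => (hline u).1, (inner_self_eq_zero (𝕜 := ℝ)).mp ?_⟩
  linarith [(hline (K v + b)).2]

end QuadraticFunctional

theorem stmt_2_general {H : Type*} [NormedAddCommGroup H] [InnerProductSpace ℝ H]
    (K : H →L[ℝ] H) (hK : ∀ u v : H, ⟪K u, v⟫ = ⟪u, K v⟫)
    (b : H) (c : ℝ) :
    (∃ ustar : H, ∀ u : H,
        ⟪K ustar, ustar⟫ + 2 * ⟪b, ustar⟫ + c ≤ ⟪K u, u⟫ + 2 * ⟪b, u⟫ + c)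
      ↔ ((∀ u : H, 0 ≤ ⟪K u, u⟫) ∧ b ∈ Set.range K) := by
  have hsym : (K : H →ₗ[ℝ] H).IsSymmetric := hK
  constructor
  · rintro ⟨v, hv⟩
    obtain ⟨hpos, hvb⟩ := nonneg_and_add_eq_zero_of_isMinimizer (c := c) hsym hv
    exact ⟨hpos, -v, by rw [map_neg, neg_eq_of_add_eq_zero_right hvb]⟩
  · rintro ⟨hpos, w, hw⟩
    refine ⟨-w, fun u => sub_nonneg.mp ?_⟩
    exact (quadraticFunctional_sub_eq_of_apply_eq (c := c) hsym hw u).symm ▸ hpos (u + w)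

/-- The quadratic functional `f(u) = ⟪K u, u⟫ + 2⟪b, u⟫ + c` associated to a bounded
self-adjoint operator `K` on a real Hilbert space attains its infimum over `H` if and only
if `K` is positive semidefinite and `b` belongs to the range of `K`. -/
theorem stmt_2 {H : Type*} [NormedAddCommGroup H] [InnerProductSpace ℝ H] [CompleteSpace H]
    (K : H →L[ℝ] H) (hK : ∀ u v : H, ⟪K u, v⟫ = ⟪u, K v⟫)
    (b : H) (c : ℝ) :
    (∃ ustar : H, ∀ u : H,
        ⟪K ustar, ustar⟫ + 2 * ⟪b, ustar⟫ + c ≤ ⟪K u, u⟫ + 2 * ⟪b, u⟫ + c)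
      ↔ ((∀ u : H, 0 ≤ ⟪K u, u⟫) ∧ b ∈ Set.range K) :=
  stmt_2_general K hK b c
end

section
/- Let H be a real Hilbert space and K : H → H a bounded self-adjoint linear operator. If there exist b ∈ H and c ∈ ℝ such that the function f(u) = ⟨K u, u⟩ + 2⟨b, u⟩ + c attains a global minimum on H, then the homogeneous quadratic f₀(u) = ⟨K u, u⟩ is convex on H and attains its global minimum at u = 0. -/
open scoped RealInnerProductSpace

/-- If for some `b ∈ H` and `c ∈ ℝ` the quadratic functional
`f(u) = ⟪K u, u⟫ + 2⟪b, u⟫ + c` attains a global minimum on the real Hilbert space `H`,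
then the homogeneous quadratic `f₀(u) = ⟪K u, u⟫` is convex on `H` and attains its global
minimum at `u = 0`. -/
theorem stmt_5 {H : Type*} [NormedAddCommGroup H] [InnerProductSpace ℝ H] [CompleteSpace H]
    (K : H →L[ℝ] H) (hK : ∀ u v : H, ⟪K u, v⟫ = ⟪u, K v⟫)
    (hmin : ∃ (b : H) (c : ℝ) (ustar : H), ∀ u : H,
      ⟪K ustar, ustar⟫ + 2 * ⟪b, ustar⟫ + c ≤ ⟪K u, u⟫ + 2 * ⟪b, u⟫ + c) :
    ConvexOn ℝ Set.univ (fun u : H => ⟪K u, u⟫)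
      ∧ ∀ u : H, ⟪K (0 : H), (0 : H)⟫ ≤ ⟪K u, u⟫ := by
  obtain ⟨b, c, u, hu⟩ := hmin
  have sym : ∀ x y : H, ⟪K x, y⟫ = ⟪K y, x⟫ := by
    intro x y
    rw [hK x y, real_inner_comm]
  have expand : ∀ x y : H, ⟪K (x + y), x + y⟫
      = ⟪K x, x⟫ + 2 * ⟪K x, y⟫ + ⟪K y, y⟫ := by
    intro x y
    rw [map_add, inner_add_left, inner_add_right, inner_add_right, sym y x]
    ring
  have hpos : ∀ v : H, 0 ≤ ⟪K v, v⟫ := by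
    intro v
    have h1 := hu (u + v)
    have h2 := hu (u + (-v))
    rw [expand u v, inner_add_right] at h1
    rw [expand u (-v), inner_add_right, inner_neg_right, inner_neg_right,
      map_neg, inner_neg_left, inner_neg_right] at h2
    linarith
  constructor
  · refine ⟨convex_univ, ?_⟩
    intro x _ y _ a b' ha hb hab
    simp only
    have hx : a • x + b' • y = x + b' • (y - x) := by
      have : a = 1 - b' := by linarith
      rw [this]; module
    rw [hx, expand x (b' • (y - x))]
    simp only [map_smul, inner_smul_left, inner_smul_right, RingHom.id_apply, smul_eq_mul, conj_trivial]
    have hexy : ⟪K (y - x), y - x⟫ = ⟪K y, y⟫ - 2 * ⟪K x, y⟫ + ⟪K x, x⟫ := by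
      have := expand y (-x)
      simp only [inner_neg_right, map_neg, inner_neg_left, inner_neg_right, neg_neg] at this
      rw [show y + -x = y - x by abel] at this
      linarith [sym x y]
    have hks : ⟪K x, y - x⟫ = ⟪K x, y⟫ - ⟪K x, x⟫ := by rw [inner_sub_right]
    have hpos' := hpos (y - x)
    rw [hexy] at hpos'
    rw [hks, hexy]
    have ha' : a = 1 - b' := by linarith
    rw [ha']
    nlinarith [mul_nonneg (mul_nonneg (by linarith : (0:ℝ) ≤ 1 - b') hb) hpos']
  · intro v
    simpa using hpos v
end

section
/- Let U and X be finite-dimensional real inner product spaces, K₂ : U → U a symmetric linear map, and K₁ : X → U a linear map. Suppose that for every x ∈ X the function u ↦ ⟨K₂ u, u⟩ + ⟨K₁ x, u⟩ attains a global minimum over U. Then there exists a linear map U* : X → U such that for every x ∈ X, the element u = U* x is a global minimizer of u ↦ ⟨K₂ u, u⟩ + ⟨K₁ x, u⟩ over U. -/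
open scoped RealInnerProductSpace

/-- If for every `x` the quadratic functional `u ↦ ⟪K₂ u, u⟫ + ⟪K₁ x, u⟫` attains a global
minimum over the finite-dimensional real inner product space `U`, then a minimizer can be
chosen linearly in `x`: there is a linear map `U* : X → U` such that `U* x` is a global
minimizer for every `x`. -/
theorem stmt_6 {U X : Type*}
    [NormedAddCommGroup U] [InnerProductSpace ℝ U] [FiniteDimensional ℝ U]
    [NormedAddCommGroup X] [InnerProductSpace ℝ X] [FiniteDimensional ℝ X]
    (K₂ : U →ₗ[ℝ] U) (hK₂ : K₂.IsSymmetric) (K₁ : X →ₗ[ℝ] U)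
    (hmin : ∀ x : X, ∃ u : U, ∀ v : U,
      ⟪K₂ u, u⟫ + ⟪K₁ x, u⟫ ≤ ⟪K₂ v, v⟫ + ⟪K₁ x, v⟫) :
    ∃ Ustar : X →ₗ[ℝ] U, ∀ x : X, ∀ v : U,
      ⟪K₂ (Ustar x), Ustar x⟫ + ⟪K₁ x, Ustar x⟫ ≤ ⟪K₂ v, v⟫ + ⟪K₁ x, v⟫ := by
  -- Step 1: K₂ is positive semidefinite.
  have hpsd : ∀ v : U, 0 ≤ ⟪K₂ v, v⟫ := by
    obtain ⟨u, hu⟩ := hmin 0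
    simp only [map_zero, inner_zero_left, add_zero] at hu
    intro v
    by_contra hneg
    push_neg at hneg
    set c := ⟪K₂ v, v⟫ with hc
    set m := ⟪K₂ u, u⟫ with hm
    have hm0 : m ≤ 0 := by simpa using hu 0
    have hpos : 0 ≤ (m - 1) / c :=
      div_nonneg_iff.mpr (Or.inr ⟨by linarith, hneg.le⟩)
    set t := Real.sqrt ((m - 1) / c) with ht
    have ht2 : t ^ 2 = (m - 1) / c := Real.sq_sqrt hpos
    have hle := hu (t • v)
    rw [map_smul, real_inner_smul_left, real_inner_smul_right] at hle
    have htc : t * (t * c) = m - 1 := by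
      rw [show t * (t * c) = t ^ 2 * c by ring, ht2,
        div_mul_cancel₀ _ hneg.ne]
    linarith
  -- Step 2: first-order condition: for each x, K₁ x ∈ range K₂.
  have hfo : ∀ x : X, K₁ x ∈ LinearMap.range K₂ := by
    intro x
    obtain ⟨u, hu⟩ := hmin x
    have hgrad : (2 : ℝ) • K₂ u + K₁ x = 0 := by
      set w := (2 : ℝ) • K₂ u + K₁ x with hw
      have hswu : ⟪K₂ w, u⟫ = ⟪K₂ u, w⟫ :=
        (hK₂ w u).trans (real_inner_comm (K₂ u) w)
      have hww : ⟪w, w⟫ = 2 * ⟪K₂ u, w⟫ + ⟪K₁ x, w⟫ := by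
        rw [hw, inner_add_left, real_inner_smul_left]
      have hzero : ∀ t : ℝ, 0 ≤ ⟪K₂ w, w⟫ * t ^ 2 + ⟪w, w⟫ * t := by
        intro t
        have hle := hu (u + t • w)
        have expand : ⟪K₂ (u + t • w), u + t • w⟫ + ⟪K₁ x, u + t • w⟫
            = (⟪K₂ u, u⟫ + ⟪K₁ x, u⟫) + ⟪K₂ w, w⟫ * t ^ 2 + ⟪w, w⟫ * t := by
          simp only [map_add, map_smul, inner_add_left, inner_add_right,
            real_inner_smul_left, real_inner_smul_right]
          rw [hww, hswu]; ring
        linarith [expand ▸ hle]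
      have ha : 0 ≤ ⟪K₂ w, w⟫ := hpsd w
      have hb : ⟪w, w⟫ = 0 := by
        set a := ⟪K₂ w, w⟫ with hadef
        set b := ⟪w, w⟫ with hbdef
        have hb0 : (0 : ℝ) ≤ b := real_inner_self_nonneg
        have hap : (0 : ℝ) < a + 1 := by linarith
        have h := hzero (-b / (a + 1))
        have e : a * (-b / (a + 1)) ^ 2 + b * (-b / (a + 1))
            = -(b ^ 2) / (a + 1) ^ 2 := by
          field_simp
          ring
        rw [e] at h
        have h' := (le_div_iff₀ (pow_pos hap 2)).mp h
        have hb2 : b ^ 2 = 0 := by nlinarith [sq_nonneg b]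
        exact pow_eq_zero_iff (by norm_num : (2:ℕ) ≠ 0) |>.mp hb2
      have : w = 0 := inner_self_eq_zero.mp (by exact_mod_cast hb)
      simpa [hw] using this
    refine ⟨(-2 : ℝ) • u, ?_⟩
    have h2 : (2 : ℝ) • K₂ u = -(K₁ x) := eq_neg_of_add_eq_zero_left hgrad
    rw [map_smul, show ((-2 : ℝ)) • (K₂ u) = -((2 : ℝ) • K₂ u) by
      module, h2, neg_neg]
  -- Step 3: a linear right inverse of K₂ on its range.
  obtain ⟨g, hg⟩ := K₂.rangeRestrict.exists_rightInverse_of_surjective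
    (LinearMap.range_rangeRestrict K₂)
  have hgval : ∀ y : LinearMap.range K₂, K₂ (g y) = (y : U) := by
    intro y
    have := LinearMap.congr_fun hg y
    simpa [Subtype.ext_iff] using congrArg Subtype.val this
  -- Step 4: define Ustar.
  set K₁' : X →ₗ[ℝ] LinearMap.range K₂ := K₁.codRestrict _ hfo with hK₁'
  refine ⟨(-(1/2 : ℝ)) • (g ∘ₗ K₁'), ?_⟩
  intro x v
  set u := ((-(1/2 : ℝ)) • (g ∘ₗ K₁')) x with hu
  have hKu : K₂ u = (-(1/2 : ℝ)) • K₁ x := by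
    have h1 : K₂ (g (K₁' x)) = K₁ x := hgval (K₁' x)
    simp [hu, map_smul, h1]
  -- Step 5: verify minimality.
  have h1 : ⟪K₂ u, v⟫ = (-(1/2 : ℝ)) * ⟪K₁ x, v⟫ := by
    rw [hKu, real_inner_smul_left]
  have h2 : ⟪K₂ u, u⟫ = (-(1/2 : ℝ)) * ⟪K₁ x, u⟫ := by
    rw [hKu, real_inner_smul_left]
  have h3 : ⟪K₂ v, u⟫ = ⟪K₂ u, v⟫ :=
    (hK₂ v u).trans (real_inner_comm (K₂ u) v)
  have hdiff : ⟪K₂ v, v⟫ + ⟪K₁ x, v⟫ - (⟪K₂ u, u⟫ + ⟪K₁ x, u⟫)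
      = ⟪K₂ (v - u), v - u⟫ := by
    simp only [map_sub, inner_sub_left, inner_sub_right]
    rw [h3]
    linarith
  linarith [hpsd (v - u)]
end
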